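/- For all n ≥ 1 and s ≥ 1, E[(ν_n - 1)^{\underline{s}}] ≥ (n-1)^{\underline{s}} · q^{(n-1)s}, where ν_n is the number of components of G(n,p) and q = 1-p. -/
import Mathlib


open Classical Finset

noncomputable section

/-- Probability that `G(n,p)` equals a given graph `g`. -/
def graphProb {n : ℕ} (p : ℝ) (g : SimpleGraph (Fin n)) : ℝ :=
  p ^ g.edgeSet.ncard * (1 - p) ^ (n.choose 2 - g.edgeSet.ncard)

/-- Probability that `G(n,p)` satisfies the predicate `P`. -/
def probEvent (n : ℕ) (p : ℝ) (P : SimpleGraph (Fin n) → Prop) : ℝ :=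
  ∑ g : SimpleGraph (Fin n), if P g then graphProb p g else 0

/-- Number of connected components. -/
def numComp {n : ℕ} (g : SimpleGraph (Fin n)) : ℕ := Nat.card g.ConnectedComponent

/-- Probability that `G(n,p)` is connected. -/
def connProb (n : ℕ) (p : ℝ) : ℝ := probEvent n p (fun g => g.Connected)

/-- `E[(ν_n - 1)^{\underline s}]`. -/
def Efall (n : ℕ) (p : ℝ) (s : ℕ) : ℝ :=
  ∑ g : SimpleGraph (Fin n), ((numComp g - 1).descFactorial s : ℝ) * graphProb p g

/-- `E[(ν_n)^{\underline s}]`. -/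
def EfallNu (n : ℕ) (p : ℝ) (s : ℕ) : ℝ :=
  ∑ g : SimpleGraph (Fin n), ((numComp g).descFactorial s : ℝ) * graphProb p g

/-- Probability that `G(n,p)` has an isolated vertex. -/
def isolProb (n : ℕ) (p : ℝ) : ℝ :=
  probEvent n p (fun g => ∃ v, ∀ w, ¬ g.Adj v w)

/- ### Auxiliary lemmas -/

lemma graphProb_nonneg {n : ℕ} {p : ℝ} (hp0 : 0 ≤ p) (hp1 : p ≤ 1)
    (g : SimpleGraph (Fin n)) : 0 ≤ graphProb p g :=
  mul_nonneg (pow_nonneg hp0 _) (pow_nonneg (by linarith) _)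

lemma graphProb_eq {n : ℕ} (p : ℝ) (g : SimpleGraph (Fin n)) :
    graphProb p g = p ^ g.edgeFinset.card * (1 - p) ^ (n.choose 2 - g.edgeFinset.card) := by
  have h : g.edgeSet.ncard = g.edgeFinset.card := by
    rw [← Set.ncard_coe_finset, SimpleGraph.coe_edgeFinset]
  rw [graphProb, h]

lemma edgeFinset_top_card {n : ℕ} :
    (⊤ : SimpleGraph (Fin n)).edgeFinset.card = n.choose 2 := by
  rw [SimpleGraph.card_edgeFinset_top_eq_card_choose_two]; simp

lemma edgeFinset_fromEdgeSet {n : ℕ} (t : Finset (Sym2 (Fin n)))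
    (ht : t ⊆ (⊤ : SimpleGraph (Fin n)).edgeFinset)
    [inst : Fintype (SimpleGraph.fromEdgeSet (↑t : Set (Sym2 (Fin n)))).edgeSet] :
    (SimpleGraph.fromEdgeSet (↑t : Set (Sym2 (Fin n)))).edgeFinset = t := by
  have hset : (SimpleGraph.fromEdgeSet (↑t : Set (Sym2 (Fin n)))).edgeSet = ↑t := by
    rw [SimpleGraph.edgeSet_fromEdgeSet]
    ext e
    simp only [Set.mem_diff, Finset.mem_coe, Set.mem_setOf_eq, and_iff_left_iff_imp]
    intro he hd
    have := ht he
    rw [SimpleGraph.mem_edgeFinset, SimpleGraph.edgeSet_top] at this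
    exact this hd
  ext e
  rw [SimpleGraph.mem_edgeFinset, hset, Finset.mem_coe]

/-- The key computation: the probability that all edges of `G(n,p)` lie in `B`. -/
lemma sum_graphProb_subset {n : ℕ} (p : ℝ) (B : Finset (Sym2 (Fin n)))
    (hB : B ⊆ (⊤ : SimpleGraph (Fin n)).edgeFinset) :
    ∑ g : SimpleGraph (Fin n), (if g.edgeFinset ⊆ B then graphProb p g else 0)
      = (1 - p) ^ (n.choose 2 - B.card) := by
  classical
  have hBN : B.card ≤ n.choose 2 := by
    rw [← edgeFinset_top_card (n := n)]; exact Finset.card_le_card hB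
  rw [← Finset.sum_filter]
  have key : ∑ g ∈ univ.filter (fun g : SimpleGraph (Fin n) => g.edgeFinset ⊆ B), graphProb p g
      = ∑ t ∈ B.powerset, p ^ t.card * (1 - p) ^ (n.choose 2 - t.card) := by
    refine Finset.sum_nbij' (i := fun g => g.edgeFinset)
      (j := fun t => SimpleGraph.fromEdgeSet (↑t : Set (Sym2 (Fin n)))) ?_ ?_ ?_ ?_ ?_
    · intro g hg
      rw [Finset.mem_powerset]
      exact (Finset.mem_filter.mp hg).2
    · intro t ht
      rw [Finset.mem_filter]
      refine ⟨Finset.mem_univ _, fun e he => ?_⟩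
      simp only [SimpleGraph.mem_edgeFinset, SimpleGraph.edgeSet_fromEdgeSet, Set.mem_diff, Finset.mem_coe,
        Set.mem_setOf_eq] at he
      exact Finset.mem_powerset.mp ht he.1
    · intro g hg
      exact (by rw [SimpleGraph.coe_edgeFinset, SimpleGraph.fromEdgeSet_edgeSet] :
        SimpleGraph.fromEdgeSet (↑g.edgeFinset : Set (Sym2 (Fin n))) = g)
    · intro t ht
      ext e
      simp only [SimpleGraph.mem_edgeFinset, SimpleGraph.edgeSet_fromEdgeSet, Set.mem_diff, Finset.mem_coe,
        Set.mem_setOf_eq, and_iff_left_iff_imp]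
      intro he hd
      have := ((Finset.mem_powerset.mp ht).trans hB) he
      rw [SimpleGraph.mem_edgeFinset, SimpleGraph.edgeSet_top] at this
      exact this hd
    · intro g hg
      rw [graphProb_eq]
  rw [key]
  have step : ∀ t ∈ B.powerset, p ^ t.card * (1 - p) ^ (n.choose 2 - t.card)
      = (1 - p) ^ (n.choose 2 - B.card) * (p ^ t.card * (1 - p) ^ (B.card - t.card)) := by
    intro t ht
    have h1 : t.card ≤ B.card := Finset.card_le_card (Finset.mem_powerset.mp ht)
    rw [show n.choose 2 - t.card = (n.choose 2 - B.card) + (B.card - t.card) by omega, pow_add]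
    ring
  rw [Finset.sum_congr rfl step, ← Finset.mul_sum]
  have hone : ∑ t ∈ B.powerset, p ^ t.card * (1 - p) ^ (B.card - t.card) = 1 := by
    rw [Finset.sum_powerset_apply_card (f := fun k => p ^ k * (1 - p) ^ (B.card - k))]
    have hap := add_pow p (1 - p) B.card
    have h2 : p + (1 - p) = 1 := by ring
    rw [h2, one_pow] at hap
    calc ∑ m ∈ range (B.card + 1), (B.card.choose m) • (p ^ m * (1 - p) ^ (B.card - m))
        = ∑ m ∈ range (B.card + 1), p ^ m * (1 - p) ^ (B.card - m) * (B.card.choose m) := by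
          refine Finset.sum_congr rfl fun m _ => ?_
          rw [nsmul_eq_mul]; ring
      _ = 1 := hap.symm
  rw [hone, mul_one]

/-- Restricting embeddings to a sub(pred)type. -/
def embRestrict {α β : Type*} (P : β → Prop) :
    {f : α ↪ β // ∀ i, P (f i)} ≃ (α ↪ {b // P b}) where
  toFun f := ⟨fun i => ⟨f.1 i, f.2 i⟩, fun i j h => f.1.injective (congrArg Subtype.val h)⟩
  invFun e := ⟨⟨fun i => (e i).1, fun i j h => e.injective (Subtype.ext h)⟩, fun i => (e i).2⟩
  left_inv f := by apply Subtype.ext; ext i; rfl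
  right_inv e := by ext i; rfl

lemma card_filter_emb {m : ℕ} {β : Type*} [Fintype β] [DecidableEq β] (S : Finset β) :
    ((univ : Finset (Fin m ↪ β)).filter (fun f => ∀ i, f i ∈ S)).card
      = S.card.descFactorial m := by
  classical
  rw [← Fintype.card_subtype]
  rw [Fintype.card_congr (embRestrict (fun b => b ∈ S))]
  rw [Fintype.card_embedding_eq]
  simp

/-- The isolated non-root vertices of a graph. -/
def isoSet {n : ℕ} (v0 : Fin n) (g : SimpleGraph (Fin n)) : Finset (Fin n) :=
  univ.filter (fun v => v ≠ v0 ∧ ∀ w, ¬ g.Adj v w)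

lemma mem_isoSet {n : ℕ} {v0 v : Fin n} {g : SimpleGraph (Fin n)} :
    v ∈ isoSet v0 g ↔ v ≠ v0 ∧ ∀ w, ¬ g.Adj v w := by simp [isoSet]

lemma isolated_eq_of_reachable {n : ℕ} {g : SimpleGraph (Fin n)} {v u : Fin n}
    (hv : ∀ w, ¬ g.Adj v w) (h : g.Reachable v u) : v = u := by
  obtain ⟨w⟩ := h
  cases w with
  | nil => rfl
  | cons h' _ => exact absurd h' (hv _)

lemma isoSet_card_le {n : ℕ} (v0 : Fin n) (g : SimpleGraph (Fin n)) :
    (isoSet v0 g).card + 1 ≤ numComp g := by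
  classical
  letI : Fintype g.ConnectedComponent := Fintype.ofFinite _
  have hnc : numComp g = Fintype.card g.ConnectedComponent := Nat.card_eq_fintype_card
  have hv0 : v0 ∉ isoSet v0 g := by simp [isoSet]
  have hinj : Set.InjOn (fun v => g.connectedComponentMk v) ↑(insert v0 (isoSet v0 g)) := by
    intro a ha b hb hab
    simp only [Finset.coe_insert, Set.mem_insert_iff, Finset.mem_coe] at ha hb
    have key : ∀ x y : Fin n, x ∈ isoSet v0 g →
        g.connectedComponentMk x = g.connectedComponentMk y → x = y := by
      intro x y hx h
      exact isolated_eq_of_reachable (mem_isoSet.mp hx).2 (SimpleGraph.ConnectedComponent.exact h)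
    have hab' : g.connectedComponentMk a = g.connectedComponentMk b := hab
    rcases ha with ha | ha
    · rcases hb with hb | hb
      · rw [ha, hb]
      · exact (key b a hb hab'.symm).symm
    · exact key a b ha hab'
  have hle := Finset.card_le_card_of_injOn (fun v => g.connectedComponentMk v)
    (fun a _ => Finset.mem_univ _) hinj
  rw [Finset.card_insert_of_notMem hv0, Finset.card_univ] at hle
  omega

theorem fallingMoment_lower (p : ℝ) (hp0 : 0 ≤ p) (hp1 : p ≤ 1) (n s : ℕ)
    (hn : 1 ≤ n) (hs : 1 ≤ s) :
    Efall n p s ≥ ((n - 1).descFactorial s : ℝ) * (1 - p) ^ ((n - 1) * s) := by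
  classical
  have hq0 : (0:ℝ) ≤ 1 - p := by linarith
  have hq1 : (1:ℝ) - p ≤ 1 := by linarith
  set v0 : Fin n := ⟨0, hn⟩ with hv0def
  set F0 : Finset (Fin s ↪ Fin n) :=
    univ.filter (fun f => ∀ i, f i ∈ (univ : Finset (Fin n)).erase v0) with hF0
  -- inner sum for a fixed embedding
  set S : (Fin s ↪ Fin n) → ℝ :=
    fun f => ∑ g : SimpleGraph (Fin n),
      (if (∀ i, f i ∈ isoSet v0 g) then graphProb p g else 0) with hS
  have hSnn : ∀ f, 0 ≤ S f := by
    intro f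
    refine Finset.sum_nonneg fun g _ => ?_
    split
    · exact graphProb_nonneg hp0 hp1 g
    · exact le_refl _
  rw [ge_iff_le]
  have hIso_card : ∀ g : SimpleGraph (Fin n), (isoSet v0 g).card ≤ numComp g - 1 := by
    intro g; have := isoSet_card_le v0 g; omega
  have expand : ∀ g : SimpleGraph (Fin n),
      (((univ : Finset (Fin s ↪ Fin n)).filter (fun f => ∀ i, f i ∈ isoSet v0 g)).card : ℝ)
        * graphProb p g
      = ∑ f : Fin s ↪ Fin n, (if (∀ i, f i ∈ isoSet v0 g) then graphProb p g else 0) := by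
    intro g
    rw [← Finset.sum_filter, Finset.sum_const, nsmul_eq_mul]
  have hF0card : (F0.card : ℝ) = ((n - 1).descFactorial s : ℝ) := by
    rw [hF0, card_filter_emb]
    congr 2
    rw [Finset.card_erase_of_mem (Finset.mem_univ _), Finset.card_univ, Fintype.card_fin]
  have hbound : ∀ f ∈ F0, (1 - p) ^ ((n - 1) * s) ≤ S f := by
    intro f hf
    have hfne : ∀ i, f i ≠ v0 := by
      intro i
      have := (Finset.mem_filter.mp hf).2 i
      exact (Finset.mem_erase.mp this).1
    set A : Finset (Sym2 (Fin n)) :=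
      (univ : Finset (Fin s)).biUnion
        (fun i => (⊤ : SimpleGraph (Fin n)).incidenceFinset (f i)) with hA
    have hAsub : A ⊆ (⊤ : SimpleGraph (Fin n)).edgeFinset := by
      intro e he
      rw [hA, Finset.mem_biUnion] at he
      obtain ⟨i, -, hi⟩ := he
      rw [SimpleGraph.mem_incidenceFinset] at hi
      exact SimpleGraph.mem_edgeFinset.mpr hi.1
    have hAcard : A.card ≤ (n - 1) * s := by
      calc A.card ≤ ∑ i : Fin s, ((⊤ : SimpleGraph (Fin n)).incidenceFinset (f i)).card :=
            Finset.card_biUnion_le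
        _ = ∑ _i : Fin s, (n - 1) := by
            refine Finset.sum_congr rfl fun i _ => ?_
            rw [SimpleGraph.card_incidenceFinset_eq_degree, SimpleGraph.complete_graph_degree,
              Fintype.card_fin]
        _ = (n - 1) * s := by
            rw [Finset.sum_const, Finset.card_univ, Fintype.card_fin, smul_eq_mul, mul_comm]
    have hevent : ∀ g : SimpleGraph (Fin n),
        (∀ i, f i ∈ isoSet v0 g) ↔
          g.edgeFinset ⊆ (⊤ : SimpleGraph (Fin n)).edgeFinset \ A := by
      intro g
      constructor
      · intro h e he
        rw [Finset.mem_sdiff]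
        refine ⟨SimpleGraph.edgeFinset_mono le_top he, fun heA => ?_⟩
        rw [hA, Finset.mem_biUnion] at heA
        obtain ⟨i, -, hi⟩ := heA
        rw [SimpleGraph.mem_incidenceFinset] at hi
        have hfi : f i ∈ e := hi.2
        have hg : e ∈ g.edgeSet := SimpleGraph.mem_edgeFinset.mp he
        have hiso := (mem_isoSet.mp (h i)).2
        have hspec := Sym2.other_spec hfi
        rw [← hspec] at hg
        exact hiso _ ((SimpleGraph.mem_edgeSet _).mp hg)
      · intro h i
        rw [mem_isoSet]
        refine ⟨hfne i, fun w hw => ?_⟩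
        have he : s(f i, w) ∈ g.edgeFinset := SimpleGraph.mem_edgeFinset.mpr hw
        have hmem := h he
        rw [Finset.mem_sdiff] at hmem
        refine hmem.2 ?_
        rw [hA, Finset.mem_biUnion]
        refine ⟨i, Finset.mem_univ _, ?_⟩
        rw [SimpleGraph.mem_incidenceFinset]
        exact ⟨(SimpleGraph.mem_edgeSet _).mpr (by simp [hw.ne] :
          (⊤ : SimpleGraph (Fin n)).Adj (f i) w), Sym2.mem_mk_left _ _⟩
    have hSf : S f = (1 - p) ^ A.card := by
      rw [hS]
      calc ∑ g : SimpleGraph (Fin n), (if (∀ i, f i ∈ isoSet v0 g) then graphProb p g else 0)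
          = ∑ g : SimpleGraph (Fin n),
            (if g.edgeFinset ⊆ (⊤ : SimpleGraph (Fin n)).edgeFinset \ A
              then graphProb p g else 0) := by
            refine Finset.sum_congr rfl fun g _ => ?_
            exact if_congr (hevent g) rfl rfl
        _ = (1 - p) ^ (n.choose 2 - ((⊤ : SimpleGraph (Fin n)).edgeFinset \ A).card) :=
            sum_graphProb_subset p _ Finset.sdiff_subset
        _ = (1 - p) ^ A.card := by
            rw [Finset.card_sdiff_of_subset hAsub, edgeFinset_top_card]
            congr 1
            have h1 : A.card ≤ n.choose 2 := by
              rw [← edgeFinset_top_card (n := n)]; exact Finset.card_le_card hAsub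
            omega
    rw [hSf]
    exact pow_le_pow_of_le_one hq0 hq1 hAcard
  calc ((n - 1).descFactorial s : ℝ) * (1 - p) ^ ((n - 1) * s)
      = ∑ _f ∈ F0, (1 - p) ^ ((n - 1) * s) := by
        rw [Finset.sum_const, nsmul_eq_mul, hF0card]
    _ ≤ ∑ f ∈ F0, S f := Finset.sum_le_sum hbound
    _ ≤ ∑ f : Fin s ↪ Fin n, S f :=
        Finset.sum_le_sum_of_subset_of_nonneg (Finset.subset_univ _) (fun f _ _ => hSnn f)
    _ = ∑ g : SimpleGraph (Fin n),
        (((univ : Finset (Fin s ↪ Fin n)).filter (fun f => ∀ i, f i ∈ isoSet v0 g)).card : ℝ)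
          * graphProb p g := by
        calc ∑ f : Fin s ↪ Fin n, S f
            = ∑ g : SimpleGraph (Fin n), ∑ f : Fin s ↪ Fin n,
              (if (∀ i, f i ∈ isoSet v0 g) then graphProb p g else 0) := Finset.sum_comm
          _ = _ := Finset.sum_congr rfl fun g _ => (expand g).symm
    _ ≤ Efall n p s := by
        refine Finset.sum_le_sum fun g _ => ?_
        rw [card_filter_emb]
        exact mul_le_mul_of_nonneg_right
          (Nat.cast_le.mpr (Nat.descFactorial_le s (hIso_card g)))
          (graphProb_nonneg hp0 hp1 g)
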